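/- There is an absolute constant C > 0 such that for all positive integers d, t, m with t ≤ (d−1)/2, if 𝔰 = (S_1,…,S_m) is chosen with the S_i independent and uniform among t-element subsets of {1,…,d−1}, and x is uniform on {0,1}^{d−1} and independent of 𝔰, then E_{𝔰,x}[ |T_𝔰(x)|·(2 − |T_𝔰(x)|) ] ≥ m·2^{−t}·(1 − m·2^{−t}·exp(C·t²/d)). -/

import Mathlib

open Finset

/-- `Tset 𝔰 x` is the set of indices `i` such that `x_j = 1` for all `j ∈ S_i`. -/
def Tset {n m : ℕ} (𝔰 : Fin m → Finset (Fin n)) (x : Fin n → Bool) : Finset (Fin m) :=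
  Finset.univ.filter (fun i => ∀ j ∈ 𝔰 i, x j = true)

-- count of x satisfying all-ones on S
lemma card_filter_all {n : ℕ} (S : Finset (Fin n)) :
    (Finset.univ.filter (fun x : Fin n → Bool => ∀ j ∈ S, x j = true)).card
      = 2 ^ (n - S.card) := by
  rw [← Fintype.card_subtype]
  have e : {x : Fin n → Bool // ∀ j ∈ S, x j = true} ≃ ({j : Fin n // j ∈ Sᶜ} → Bool) :=
  { toFun := fun x j => x.1 j.1
    invFun := fun g => ⟨fun j => if h : j ∈ Sᶜ then g ⟨j, h⟩ else true, fun j hj => by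
      simp [Finset.mem_compl, hj]⟩
    left_inv := fun x => by
      ext j
      by_cases h : j ∈ Sᶜ
      · simp [h]
      · simp only [h, dif_neg, not_false_iff]
        exact (x.2 j (by simpa [Finset.mem_compl] using h)).symm
    right_inv := fun g => by ext j; simp [j.2] }
  rw [Fintype.card_congr e, Fintype.card_fun, Fintype.card_coe, Finset.card_compl,
    Fintype.card_fin, Fintype.card_bool]

-- count of t-sets containing A
lemma card_filter_superset {n t : ℕ} (A : Finset (Fin n)) (hA : A.card ≤ t) :
    ((Finset.powersetCard t (Finset.univ : Finset (Fin n))).filter (fun S => A ⊆ S)).card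
      = (n - A.card).choose (t - A.card) := by
  have key : ((Finset.powersetCard t (Finset.univ : Finset (Fin n))).filter
        (fun S => A ⊆ S)).card = (Finset.powersetCard (t - A.card) Aᶜ).card := by
    apply Finset.card_nbij' (fun S => S \ A) (fun B => B ∪ A)
    · intro S hS
      simp only [Finset.mem_coe, Finset.mem_filter, Finset.mem_powersetCard_univ] at hS
      rw [Finset.mem_coe, Finset.mem_powersetCard]
      refine ⟨fun j hj => ?_, ?_⟩
      · simp only [Finset.mem_sdiff] at hj
        simp [Finset.mem_compl, hj.2]
      · rw [Finset.card_sdiff_of_subset hS.2, hS.1]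
    · intro B hB
      rw [Finset.mem_coe, Finset.mem_powersetCard] at hB
      have hdisj : Disjoint B A := by
        refine Finset.disjoint_left.2 fun a haB haA => ?_
        have := hB.1 haB
        simp [Finset.mem_compl] at this
        exact this haA
      simp only [Finset.mem_coe, Finset.mem_filter, Finset.mem_powersetCard_univ]
      constructor
      · rw [Finset.card_union_of_disjoint hdisj, hB.2]
        omega
      · exact Finset.subset_union_right
    · intro S hS
      simp only [Finset.mem_coe, Finset.mem_filter] at hS
      exact Finset.sdiff_union_of_subset hS.2
    · intro B hB
      rw [Finset.mem_coe, Finset.mem_powersetCard] at hB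
      apply Finset.union_sdiff_cancel_right
      refine Finset.disjoint_left.2 fun a haB haA => ?_
      have := hB.1 haB
      simp [Finset.mem_compl] at this
      exact this haA
  rw [key, Finset.card_powersetCard, Finset.card_compl, Fintype.card_fin]

-- key nat inequality
lemma key_nat {n t j : ℕ} (hj : j ≤ t) (hn : 2 * t ≤ n) :
    t.choose j ^ 2 * j.factorial * n ^ j ≤ 2 ^ j * t ^ (2 * j) * n.choose j := by
  have hd : t.descFactorial j ^ 2 * n ^ j ≤ 2 ^ j * t ^ (2 * j) * n.descFactorial j := by
    calc t.descFactorial j ^ 2 * n ^ j ≤ (t ^ j) ^ 2 * (2 * (n - t)) ^ j := by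
          gcongr
          · exact Nat.descFactorial_le_pow _ _
          · omega
      _ = 2 ^ j * t ^ (2 * j) * (n - t) ^ j := by
          rw [mul_pow]; ring
      _ ≤ 2 ^ j * t ^ (2 * j) * n.descFactorial j := by
          gcongr
          calc (n - t) ^ j ≤ (n + 1 - j) ^ j := by gcongr <;> omega
            _ ≤ n.descFactorial j := Nat.pow_sub_le_descFactorial n j
  have hfac : 0 < j.factorial := j.factorial_pos
  have h2 : t.choose j ^ 2 * j.factorial * n ^ j * j.factorial
      ≤ 2 ^ j * t ^ (2 * j) * n.choose j * j.factorial := by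
    calc t.choose j ^ 2 * j.factorial * n ^ j * j.factorial
        = (j.factorial * t.choose j) ^ 2 * n ^ j := by ring
      _ = t.descFactorial j ^ 2 * n ^ j := by
          rw [Nat.descFactorial_eq_factorial_mul_choose]
      _ ≤ 2 ^ j * t ^ (2 * j) * n.descFactorial j := hd
      _ = 2 ^ j * t ^ (2 * j) * n.choose j * j.factorial := by
          rw [Nat.descFactorial_eq_factorial_mul_choose]; ring
  exact Nat.le_of_mul_le_mul_right h2 hfac


lemma sum_piFinset_single {m : ℕ} {α : Type*} [DecidableEq α] (𝒮 : Finset α)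
    (F : α → ℝ) (i : Fin m) :
    ∑ 𝔰 ∈ Fintype.piFinset (fun _ : Fin m => 𝒮), F (𝔰 i)
      = (𝒮.card : ℝ) ^ (m - 1) * ∑ S ∈ 𝒮, F S := by
  have hpt : ∀ 𝔰 : Fin m → α, F (𝔰 i) = ∏ k, (if k = i then F (𝔰 k) else 1) := by
    intro 𝔰
    rw [Finset.prod_ite_eq' Finset.univ i (fun k => F (𝔰 k))]
    simp
  simp_rw [hpt]
  rw [Finset.sum_prod_piFinset 𝒮 (fun k S => if k = i then F S else 1)]
  have hin : ∀ k : Fin m, (∑ S ∈ 𝒮, if k = i then F S else 1)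
      = if k = i then ∑ S ∈ 𝒮, F S else (𝒮.card : ℝ) := by
    intro k; split_ifs <;> simp
  simp_rw [hin]
  have hprod : ∏ k ∈ Finset.univ.erase i,
      (if k = i then ∑ S ∈ 𝒮, F S else (𝒮.card : ℝ)) = (𝒮.card : ℝ) ^ (m - 1) := by
    calc ∏ k ∈ Finset.univ.erase i, (if k = i then ∑ S ∈ 𝒮, F S else (𝒮.card : ℝ))
        = ∏ _k ∈ Finset.univ.erase i, (𝒮.card : ℝ) :=
          Finset.prod_congr rfl (fun k hk => if_neg (Finset.ne_of_mem_erase hk))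
      _ = (𝒮.card : ℝ) ^ (m - 1) := by
          rw [Finset.prod_const, Finset.card_erase_of_mem (Finset.mem_univ i),
            Finset.card_univ, Fintype.card_fin]
  rw [← Finset.mul_prod_erase Finset.univ _ (Finset.mem_univ i), if_pos rfl, hprod]
  ring

lemma sum_piFinset_pair {m : ℕ} {α : Type*} [DecidableEq α] (𝒮 : Finset α)
    (F G : α → ℝ) {i j : Fin m} (hij : i ≠ j) :
    ∑ 𝔰 ∈ Fintype.piFinset (fun _ : Fin m => 𝒮), F (𝔰 i) * G (𝔰 j)
      = (𝒮.card : ℝ) ^ (m - 2) * ((∑ S ∈ 𝒮, F S) * ∑ S ∈ 𝒮, G S) := by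
  have hjmem : j ∈ Finset.univ.erase i := Finset.mem_erase.2 ⟨hij.symm, Finset.mem_univ j⟩
  have hpt : ∀ 𝔰 : Fin m → α, F (𝔰 i) * G (𝔰 j)
      = ∏ k, (if k = i then F (𝔰 k) else if k = j then G (𝔰 k) else 1) := by
    intro 𝔰
    rw [← Finset.mul_prod_erase Finset.univ _ (Finset.mem_univ i),
      ← Finset.mul_prod_erase _ _ hjmem, if_pos rfl, if_neg hij.symm, if_pos rfl]
    have hone : ∏ k ∈ (Finset.univ.erase i).erase j,
        (if k = i then F (𝔰 k) else if k = j then G (𝔰 k) else 1) = 1 := by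
      refine Finset.prod_eq_one (fun k hk => ?_)
      rw [if_neg (Finset.mem_erase.1 (Finset.mem_erase.1 hk).2).1,
        if_neg (Finset.mem_erase.1 hk).1]
    rw [hone, mul_one]
  simp_rw [hpt]
  rw [Finset.sum_prod_piFinset 𝒮 (fun k S => if k = i then F S else if k = j then G S else 1)]
  have hin : ∀ k : Fin m, (∑ S ∈ 𝒮, if k = i then F S else if k = j then G S else 1)
      = if k = i then ∑ S ∈ 𝒮, F S else if k = j then ∑ S ∈ 𝒮, G S else (𝒮.card : ℝ) := by
    intro k; split_ifs <;> simp
  simp_rw [hin]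
  have hprod : ∏ k ∈ (Finset.univ.erase i).erase j,
      (if k = i then ∑ S ∈ 𝒮, F S else if k = j then ∑ S ∈ 𝒮, G S else (𝒮.card : ℝ))
      = (𝒮.card : ℝ) ^ (m - 2) := by
    calc ∏ k ∈ (Finset.univ.erase i).erase j,
        (if k = i then ∑ S ∈ 𝒮, F S else if k = j then ∑ S ∈ 𝒮, G S else (𝒮.card : ℝ))
        = ∏ _k ∈ (Finset.univ.erase i).erase j, (𝒮.card : ℝ) := by
          refine Finset.prod_congr rfl (fun k hk => ?_)
          rw [if_neg (Finset.mem_erase.1 (Finset.mem_erase.1 hk).2).1,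
            if_neg (Finset.mem_erase.1 hk).1]
      _ = (𝒮.card : ℝ) ^ (m - 2) := by
          rw [Finset.prod_const, Finset.card_erase_of_mem hjmem,
            Finset.card_erase_of_mem (Finset.mem_univ i), Finset.card_univ, Fintype.card_fin,
            show m - 1 - 1 = m - 2 by omega]
  rw [← Finset.mul_prod_erase Finset.univ _ (Finset.mem_univ i),
    ← Finset.mul_prod_erase _ _ hjmem, if_pos rfl, if_neg hij.symm, if_pos rfl, hprod]
  ring

lemma main_bound (n t m : ℕ) (ht : 0 < t) (hm : 0 < m) (h2t : 2 * t ≤ n)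
    (r : ℝ) (hr : 2 * (t : ℝ) ^ 2 / n ≤ r) :
    (m : ℝ) * (2 : ℝ)⁻¹ ^ t * (1 - (m : ℝ) * (2 : ℝ)⁻¹ ^ t * Real.exp r)
      ≤ (∑ p ∈ (Finset.univ.filter
              (fun 𝔰 : Fin m → Finset (Fin n) => ∀ i, (𝔰 i).card = t)) ×ˢ
            (Finset.univ : Finset (Fin n → Bool)),
            ((Tset p.1 p.2).card : ℝ) * (2 - ((Tset p.1 p.2).card : ℝ)))
          / (((Finset.univ.filter
              (fun 𝔰 : Fin m → Finset (Fin n) => ∀ i, (𝔰 i).card = t)).card : ℝ) * 2 ^ n) := by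
  set Ω : Finset (Fin m → Finset (Fin n)) :=
    Finset.univ.filter (fun 𝔰 => ∀ i, (𝔰 i).card = t) with hΩdef
  have htn : t ≤ n := by omega
  set 𝒮 : Finset (Finset (Fin n)) := Finset.powersetCard t Finset.univ with h𝒮
  set N : ℕ := n.choose t with hN
  have hNpos : 0 < N := Nat.choose_pos htn
  have h𝒮card : 𝒮.card = N := by
    rw [h𝒮, Finset.card_powersetCard, Finset.card_univ, Fintype.card_fin]
  have hΩ : Ω = Fintype.piFinset (fun _ : Fin m => 𝒮) := by
    rw [hΩdef]
    ext 𝔰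
    simp [Fintype.mem_piFinset, h𝒮, Finset.mem_powersetCard_univ]
  have hΩcard : Ω.card = N ^ m := by
    rw [hΩ, Fintype.card_piFinset]
    simp [h𝒮card]
  -- the indicator function
  set χ : Finset (Fin n) → (Fin n → Bool) → ℝ :=
    fun S x => if ∀ j ∈ S, x j = true then 1 else 0 with hχ
  set A : (Fin n → Bool) → ℝ := fun x => ∑ S ∈ 𝒮, χ S x with hA
  have hZ : ∀ (𝔰 : Fin m → Finset (Fin n)) (x : Fin n → Bool),
      ((Tset 𝔰 x).card : ℝ) = ∑ i, χ (𝔰 i) x := by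
    intro 𝔰 x
    rw [Tset, Finset.card_filter]
    push_cast
    rfl
  have hχsq : ∀ S x, χ S x * χ S x = χ S x := by
    intro S x
    simp only [hχ]
    split_ifs <;> norm_num
  have hχmul : ∀ S S' x, χ S x * χ S' x = χ (S ∪ S') x := by
    intro S S' x
    simp only [hχ, Finset.forall_mem_union]
    split_ifs <;> simp_all
  have hχsum : ∀ S : Finset (Fin n), ∑ x : Fin n → Bool, χ S x = 2 ^ (n - S.card) := by
    intro S
    simp only [hχ]
    rw [Finset.sum_boole, card_filter_all]
    push_cast
    ring
  -- inner sum over 𝔰 for fixed x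
  have hmain : ∀ x : Fin n → Bool,
      (∑ 𝔰 ∈ Ω, ((Tset 𝔰 x).card : ℝ) * (2 - ((Tset 𝔰 x).card : ℝ)))
        = (m : ℝ) * (N : ℝ) ^ (m - 1) * A x
          - (m : ℝ) * ((m : ℝ) - 1) * (N : ℝ) ^ (m - 2) * (A x) ^ 2 := by
    intro x
    have hsingle : ∀ i : Fin m, ∑ 𝔰 ∈ Ω, χ (𝔰 i) x = (N : ℝ) ^ (m - 1) * A x := by
      intro i
      rw [hΩ, sum_piFinset_single 𝒮 (fun S => χ S x) i, h𝒮card]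
    have hpair : ∀ i j : Fin m, i ≠ j →
        ∑ 𝔰 ∈ Ω, χ (𝔰 i) x * χ (𝔰 j) x = (N : ℝ) ^ (m - 2) * (A x * A x) := by
      intro i j hij
      rw [hΩ, sum_piFinset_pair 𝒮 (fun S => χ S x) (fun S => χ S x) hij, h𝒮card]
    have expand : ∀ 𝔰 ∈ Ω, ((Tset 𝔰 x).card : ℝ) * (2 - ((Tset 𝔰 x).card : ℝ))
        = 2 * (∑ i, χ (𝔰 i) x) - ∑ i, ∑ j, χ (𝔰 i) x * χ (𝔰 j) x := by
      intro 𝔰 _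
      rw [hZ, ← Finset.sum_mul_sum]
      ring
    rw [Finset.sum_congr rfl expand, Finset.sum_sub_distrib]
    have h1 : ∑ 𝔰 ∈ Ω, 2 * (∑ i, χ (𝔰 i) x)
        = 2 * ((m : ℝ) * ((N : ℝ) ^ (m - 1) * A x)) := by
      rw [← Finset.mul_sum, Finset.sum_comm]
      congr 1
      rw [Finset.sum_congr rfl (fun i _ => hsingle i), Finset.sum_const, Finset.card_univ,
        Fintype.card_fin, nsmul_eq_mul]
    have h2 : ∑ 𝔰 ∈ Ω, ∑ i, ∑ j, χ (𝔰 i) x * χ (𝔰 j) x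
        = (m : ℝ) * ((N : ℝ) ^ (m - 1) * A x
            + ((m : ℝ) - 1) * ((N : ℝ) ^ (m - 2) * (A x * A x))) := by
      rw [Finset.sum_comm]
      have hi : ∀ i : Fin m, ∑ 𝔰 ∈ Ω, ∑ j, χ (𝔰 i) x * χ (𝔰 j) x
          = (N : ℝ) ^ (m - 1) * A x
            + ((m : ℝ) - 1) * ((N : ℝ) ^ (m - 2) * (A x * A x)) := by
        intro i
        rw [Finset.sum_comm, ← Finset.add_sum_erase Finset.univ _ (Finset.mem_univ i)]
        congr 1
        · rw [Finset.sum_congr rfl (fun 𝔰 _ => hχsq (𝔰 i) x), hsingle i]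
        · have herase : ∀ j ∈ Finset.univ.erase i,
              ∑ 𝔰 ∈ Ω, χ (𝔰 i) x * χ (𝔰 j) x = (N : ℝ) ^ (m - 2) * (A x * A x) := by
            intro j hj
            exact hpair i j (Finset.ne_of_mem_erase hj).symm
          rw [Finset.sum_congr rfl herase, Finset.sum_const,
            Finset.card_erase_of_mem (Finset.mem_univ i), Finset.card_univ, Fintype.card_fin,
            nsmul_eq_mul]
          congr 1
          push_cast [Nat.cast_sub (by omega : 1 ≤ m)]
          ring
      rw [Finset.sum_congr rfl (fun i _ => hi i), Finset.sum_const, Finset.card_univ,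
        Fintype.card_fin, nsmul_eq_mul]
    rw [h1, h2]
    ring
  -- sums over x
  have hA1 : ∑ x : Fin n → Bool, A x = (N : ℝ) * 2 ^ (n - t) := by
    have hcards : ∀ S ∈ 𝒮, ∑ x : Fin n → Bool, χ S x = (2 : ℝ) ^ (n - t) := by
      intro S hS
      rw [hχsum S, Finset.mem_powersetCard_univ.1 (h𝒮 ▸ hS)]
    simp only [hA]
    rw [Finset.sum_comm, Finset.sum_congr rfl hcards, Finset.sum_const, h𝒮card, nsmul_eq_mul]
  have hA2 : ∑ x : Fin n → Bool, (A x) ^ 2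
      = ∑ S ∈ 𝒮, ∑ S' ∈ 𝒮, (2 : ℝ) ^ (n - (S ∪ S').card) := by
    have hsq : ∀ x : Fin n → Bool, (A x) ^ 2 = ∑ S ∈ 𝒮, ∑ S' ∈ 𝒮, χ (S ∪ S') x := by
      intro x
      simp only [hA]
      rw [sq, Finset.sum_mul_sum]
      exact Finset.sum_congr rfl fun S _ => Finset.sum_congr rfl fun S' _ => hχmul S S' x
    calc ∑ x : Fin n → Bool, (A x) ^ 2
        = ∑ x : Fin n → Bool, ∑ S ∈ 𝒮, ∑ S' ∈ 𝒮, χ (S ∪ S') x :=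
          Finset.sum_congr rfl fun x _ => hsq x
      _ = ∑ S ∈ 𝒮, ∑ x : Fin n → Bool, ∑ S' ∈ 𝒮, χ (S ∪ S') x := Finset.sum_comm
      _ = ∑ S ∈ 𝒮, ∑ S' ∈ 𝒮, ∑ x : Fin n → Bool, χ (S ∪ S') x :=
          Finset.sum_congr rfl fun S _ => Finset.sum_comm
      _ = ∑ S ∈ 𝒮, ∑ S' ∈ 𝒮, (2 : ℝ) ^ (n - (S ∪ S').card) :=
          Finset.sum_congr rfl fun S _ => Finset.sum_congr rfl fun S' _ => hχsum (S ∪ S')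
  -- key upper bound
  have hQ : ∑ S ∈ 𝒮, ∑ S' ∈ 𝒮, (2 : ℝ) ^ (n - (S ∪ S').card)
      ≤ (N : ℝ) ^ 2 * 2 ^ n * ((4 : ℝ)⁻¹) ^ t * Real.exp r := by
    have hnpos : 0 < n := by omega
    set B : Finset (Fin n) → ℝ :=
      fun A' => (((𝒮.filter (fun S => A' ⊆ S)).card : ℕ) : ℝ) with hB
    -- step 1 : pointwise rewrite of the power
    have step1 : ∀ S ∈ 𝒮, ∀ S' ∈ 𝒮, (2 : ℝ) ^ (n - (S ∪ S').card)
        = 2 ^ n * ((4 : ℝ)⁻¹) ^ t * 2 ^ ((S ∩ S').card) := by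
      intro S hS S' hS'
      have hcS : S.card = t := Finset.mem_powersetCard_univ.1 (h𝒮 ▸ hS)
      have hcS' : S'.card = t := Finset.mem_powersetCard_univ.1 (h𝒮 ▸ hS')
      have hu : (S ∪ S').card + (S ∩ S').card = 2 * t := by
        rw [Finset.card_union_add_card_inter, hcS, hcS']
        ring
      have hun : (S ∪ S').card ≤ n := by
        have := Finset.card_le_univ (S ∪ S')
        simpa using this
      have e1 : (2 : ℝ) ^ (n - (S ∪ S').card) * 2 ^ ((S ∪ S').card) = 2 ^ n := by
        rw [← pow_add, Nat.sub_add_cancel hun]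
      have e2 : (2 : ℝ) ^ ((S ∪ S').card) * 2 ^ ((S ∩ S').card) = 4 ^ t := by
        rw [← pow_add, hu, pow_mul]
        norm_num
      have h2pos : (0 : ℝ) < 2 ^ ((S ∪ S').card) := by positivity
      rw [inv_pow, ← e1, ← e2]
      field_simp
    -- step 3 : binary expansion of 2 ^ |S ∩ S'|
    have step3 : ∀ S S' : Finset (Fin n), (2 : ℝ) ^ ((S ∩ S').card)
        = ∑ A' : Finset (Fin n),
            (if A' ⊆ S then (1 : ℝ) else 0) * (if A' ⊆ S' then (1 : ℝ) else 0) := by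
      intro S S'
      have hmul : ∀ A' : Finset (Fin n),
          (if A' ⊆ S then (1 : ℝ) else 0) * (if A' ⊆ S' then (1 : ℝ) else 0)
            = if A' ⊆ S ∩ S' then (1 : ℝ) else 0 := by
        intro A'
        by_cases h1 : A' ⊆ S <;> by_cases h2 : A' ⊆ S' <;>
          simp [h1, h2, Finset.subset_inter_iff]
      have hps : Finset.univ.filter (fun A' : Finset (Fin n) => A' ⊆ S ∩ S')
          = (S ∩ S').powerset := by
        ext A'
        simp only [Finset.mem_filter, Finset.mem_univ, true_and, Finset.mem_powerset]
      calc (2 : ℝ) ^ ((S ∩ S').card) = (((S ∩ S').powerset.card : ℕ) : ℝ) := by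
            rw [Finset.card_powerset]
            push_cast
            ring
        _ = ∑ A' : Finset (Fin n), if A' ⊆ S ∩ S' then (1 : ℝ) else 0 := by
            rw [Finset.sum_boole, hps]
        _ = _ := Finset.sum_congr rfl fun A' _ => (hmul A').symm
    -- step 4 : reorganize into a sum of squares
    have step4 : ∑ S ∈ 𝒮, ∑ S' ∈ 𝒮, (2 : ℝ) ^ ((S ∩ S').card)
        = ∑ A' : Finset (Fin n), (B A') ^ 2 := by
      have hBsum : ∀ A' : Finset (Fin n),
          ∑ S ∈ 𝒮, (if A' ⊆ S then (1 : ℝ) else 0) = B A' := by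
        intro A'
        rw [Finset.sum_boole, hB]
      calc ∑ S ∈ 𝒮, ∑ S' ∈ 𝒮, (2 : ℝ) ^ ((S ∩ S').card)
          = ∑ S ∈ 𝒮, ∑ S' ∈ 𝒮, ∑ A' : Finset (Fin n),
              (if A' ⊆ S then (1 : ℝ) else 0) * (if A' ⊆ S' then (1 : ℝ) else 0) :=
            Finset.sum_congr rfl fun S _ => Finset.sum_congr rfl fun S' _ => step3 S S'
        _ = ∑ S ∈ 𝒮, ∑ A' : Finset (Fin n), ∑ S' ∈ 𝒮,
              (if A' ⊆ S then (1 : ℝ) else 0) * (if A' ⊆ S' then (1 : ℝ) else 0) :=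
            Finset.sum_congr rfl fun S _ => Finset.sum_comm
        _ = ∑ A' : Finset (Fin n), ∑ S ∈ 𝒮, ∑ S' ∈ 𝒮,
              (if A' ⊆ S then (1 : ℝ) else 0) * (if A' ⊆ S' then (1 : ℝ) else 0) :=
            Finset.sum_comm
        _ = ∑ A' : Finset (Fin n), (B A') ^ 2 := by
            refine Finset.sum_congr rfl fun A' _ => ?_
            rw [← Finset.sum_mul_sum, hBsum A', sq]
    -- step 5 : bound the sum of squares
    have step5 : ∑ A' : Finset (Fin n), (B A') ^ 2 ≤ (N : ℝ) ^ 2 * Real.exp r := by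
      have hgroup : ∑ A' : Finset (Fin n), (B A') ^ 2
          = ∑ j ∈ Finset.range (n + 1),
              ∑ A' ∈ Finset.powersetCard j (Finset.univ : Finset (Fin n)), (B A') ^ 2 := by
        rw [← Finset.powerset_univ, Finset.powerset_card_disjiUnion]
        exact (Finset.sum_disjiUnion _ _ _).trans (by rw [Finset.card_univ, Fintype.card_fin])
      have hvanish : ∀ j ∈ Finset.range (n + 1), j ∉ Finset.range (t + 1) →
          ∑ A' ∈ Finset.powersetCard j (Finset.univ : Finset (Fin n)), (B A') ^ 2 = 0 := by
        intro j _ hjt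
        refine Finset.sum_eq_zero fun A' hA' => ?_
        have hcard : A'.card = j := (Finset.mem_powersetCard.1 hA').2
        have hempty : 𝒮.filter (fun S => A' ⊆ S) = ∅ := by
          refine Finset.filter_eq_empty_iff.2 fun S hS => ?_
          intro hsub
          have hcS : S.card = t := Finset.mem_powersetCard_univ.1 (h𝒮 ▸ hS)
          have := Finset.card_le_card hsub
          rw [hcard, hcS] at this
          simp only [Finset.mem_range] at hjt
          omega
        rw [hB]
        simp [hempty]
      have hinner : ∀ j ∈ Finset.range (t + 1),
          ∑ A' ∈ Finset.powersetCard j (Finset.univ : Finset (Fin n)), (B A') ^ 2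
            = (n.choose j : ℝ) * (((n - j).choose (t - j) : ℕ) : ℝ) ^ 2 := by
        intro j hj
        have hjt : j ≤ t := by
          simp only [Finset.mem_range] at hj
          omega
        calc ∑ A' ∈ Finset.powersetCard j (Finset.univ : Finset (Fin n)), (B A') ^ 2
            = ∑ _A' ∈ Finset.powersetCard j (Finset.univ : Finset (Fin n)),
                (((n - j).choose (t - j) : ℕ) : ℝ) ^ 2 := by
              refine Finset.sum_congr rfl fun A' hA' => ?_
              have hc : A'.card = j := (Finset.mem_powersetCard.1 hA').2
              rw [hB]
              simp only [h𝒮]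
              rw [card_filter_superset A' (by rw [hc]; exact hjt), hc]
          _ = (n.choose j : ℝ) * (((n - j).choose (t - j) : ℕ) : ℝ) ^ 2 := by
              rw [Finset.sum_const, Finset.card_powersetCard, Finset.card_univ,
                Fintype.card_fin, nsmul_eq_mul]
      have hterm : ∀ j ∈ Finset.range (t + 1),
          (n.choose j : ℝ) * (((n - j).choose (t - j) : ℕ) : ℝ) ^ 2
            ≤ (N : ℝ) ^ 2 * ((2 * (t : ℝ) ^ 2 / n) ^ j / j.factorial) := by
        intro j hj
        have hjt : j ≤ t := by
          simp only [Finset.mem_range] at hj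
          omega
        have hjn : j ≤ n := by omega
        have hCnj : (0 : ℝ) < (n.choose j : ℝ) := by
          exact_mod_cast Nat.choose_pos hjn
        have hid : (N : ℝ) * (t.choose j : ℝ)
            = (n.choose j : ℝ) * (((n - j).choose (t - j) : ℕ) : ℝ) := by
          exact_mod_cast congrArg (Nat.cast (R := ℝ)) (Nat.choose_mul (n := n) hjt)
        have hE : (((n - j).choose (t - j) : ℕ) : ℝ)
            = (N : ℝ) * (t.choose j : ℝ) / (n.choose j : ℝ) := by
          rw [eq_div_iff hCnj.ne']
          linarith [hid]
        rw [hE, div_pow, mul_pow]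
        have hrw : (n.choose j : ℝ) * ((N : ℝ) ^ 2 * (t.choose j : ℝ) ^ 2 / (n.choose j : ℝ) ^ 2)
            = (N : ℝ) ^ 2 * ((t.choose j : ℝ) ^ 2 / (n.choose j : ℝ)) := by
          field_simp
        rw [hrw]
        have hnR : (0 : ℝ) < (n : ℝ) := by exact_mod_cast hnpos
        have hfj : (0 : ℝ) < (j.factorial : ℝ) := by exact_mod_cast j.factorial_pos
        have hfrac : (t.choose j : ℝ) ^ 2 / (n.choose j : ℝ)
            ≤ (2 * (t : ℝ) ^ 2 / n) ^ j / j.factorial := by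
          rw [div_pow, div_le_div_iff₀ hCnj hfj, div_mul_eq_mul_div, le_div_iff₀ (by positivity)]
          have hkey := key_nat hjt h2t
          have hkeyR : (t.choose j : ℝ) ^ 2 * (j.factorial : ℝ) * (n : ℝ) ^ j
              ≤ (2 : ℝ) ^ j * (t : ℝ) ^ (2 * j) * (n.choose j : ℝ) := by
            exact_mod_cast hkey
          calc (t.choose j : ℝ) ^ 2 * (j.factorial : ℝ) * (n : ℝ) ^ j
              ≤ (2 : ℝ) ^ j * (t : ℝ) ^ (2 * j) * (n.choose j : ℝ) := hkeyR
            _ = (2 * (t : ℝ) ^ 2) ^ j * (n.choose j : ℝ) := by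
                rw [mul_pow, pow_mul]
        exact mul_le_mul_of_nonneg_left hfrac (by positivity)
      have hx0 : (0 : ℝ) ≤ 2 * (t : ℝ) ^ 2 / n := by positivity
      calc ∑ A' : Finset (Fin n), (B A') ^ 2
          = ∑ j ∈ Finset.range (t + 1),
              ∑ A' ∈ Finset.powersetCard j (Finset.univ : Finset (Fin n)), (B A') ^ 2 := by
            rw [hgroup, ← Finset.sum_subset (Finset.range_subset_range.2 (by omega : t + 1 ≤ n + 1))
              hvanish]
        _ = ∑ j ∈ Finset.range (t + 1),
              (n.choose j : ℝ) * (((n - j).choose (t - j) : ℕ) : ℝ) ^ 2 :=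
            Finset.sum_congr rfl hinner
        _ ≤ ∑ j ∈ Finset.range (t + 1),
              (N : ℝ) ^ 2 * ((2 * (t : ℝ) ^ 2 / n) ^ j / j.factorial) :=
            Finset.sum_le_sum hterm
        _ = (N : ℝ) ^ 2 * ∑ j ∈ Finset.range (t + 1),
              ((2 * (t : ℝ) ^ 2 / n) ^ j / j.factorial) := by rw [Finset.mul_sum]
        _ ≤ (N : ℝ) ^ 2 * Real.exp (2 * (t : ℝ) ^ 2 / n) := by
            have := Real.sum_le_exp_of_nonneg hx0 (t + 1)
            have hN2 : (0 : ℝ) ≤ (N : ℝ) ^ 2 := by positivity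
            exact mul_le_mul_of_nonneg_left this hN2
        _ ≤ (N : ℝ) ^ 2 * Real.exp r := by
            have hN2 : (0 : ℝ) ≤ (N : ℝ) ^ 2 := by positivity
            exact mul_le_mul_of_nonneg_left (Real.exp_le_exp.2 hr) hN2
    -- combine
    calc ∑ S ∈ 𝒮, ∑ S' ∈ 𝒮, (2 : ℝ) ^ (n - (S ∪ S').card)
        = ∑ S ∈ 𝒮, ∑ S' ∈ 𝒮, 2 ^ n * ((4 : ℝ)⁻¹) ^ t * 2 ^ ((S ∩ S').card) :=
          Finset.sum_congr rfl fun S hS => Finset.sum_congr rfl fun S' hS' => step1 S hS S' hS'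
      _ = 2 ^ n * ((4 : ℝ)⁻¹) ^ t * ∑ S ∈ 𝒮, ∑ S' ∈ 𝒮, (2 : ℝ) ^ ((S ∩ S').card) := by
          rw [Finset.mul_sum]
          exact Finset.sum_congr rfl fun S _ => by rw [Finset.mul_sum]
      _ = 2 ^ n * ((4 : ℝ)⁻¹) ^ t * ∑ A' : Finset (Fin n), (B A') ^ 2 := by rw [step4]
      _ ≤ 2 ^ n * ((4 : ℝ)⁻¹) ^ t * ((N : ℝ) ^ 2 * Real.exp r) := by
          have hpos : (0 : ℝ) ≤ 2 ^ n * ((4 : ℝ)⁻¹) ^ t := by positivity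
          exact mul_le_mul_of_nonneg_left step5 hpos
      _ = (N : ℝ) ^ 2 * 2 ^ n * ((4 : ℝ)⁻¹) ^ t * Real.exp r := by ring
  -- assembly
  have hDpos : (0 : ℝ) < ((Ω.card : ℕ) : ℝ) * 2 ^ n := by
    rw [hΩcard]
    positivity
  rw [le_div_iff₀ hDpos]
  have hsum : (∑ p ∈ Ω ×ˢ (Finset.univ : Finset (Fin n → Bool)),
        ((Tset p.1 p.2).card : ℝ) * (2 - ((Tset p.1 p.2).card : ℝ)))
      = (m : ℝ) * (N : ℝ) ^ m * 2 ^ (n - t)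
        - (m : ℝ) * ((m : ℝ) - 1) * (N : ℝ) ^ (m - 2)
          * ∑ S ∈ 𝒮, ∑ S' ∈ 𝒮, (2 : ℝ) ^ (n - (S ∪ S').card) := by
    rw [Finset.sum_product, Finset.sum_comm,
      Finset.sum_congr rfl (fun x _ => hmain x), Finset.sum_sub_distrib,
      ← Finset.mul_sum, ← Finset.mul_sum, hA1, hA2]
    have hNm : (N : ℝ) ^ (m - 1) * (N : ℝ) = (N : ℝ) ^ m := by
      rw [← pow_succ, Nat.sub_add_cancel hm]
    rw [show (m : ℝ) * (N : ℝ) ^ (m - 1) * ((N : ℝ) * 2 ^ (n - t))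
      = (m : ℝ) * ((N : ℝ) ^ (m - 1) * (N : ℝ)) * 2 ^ (n - t) from by ring, hNm]
  rw [hsum, hΩcard]
  push_cast
  have hp2n : ((2 : ℝ)⁻¹) ^ t * 2 ^ n = 2 ^ (n - t) := by
    have h1 : (2 : ℝ) ^ (n - t) * 2 ^ t = 2 ^ n := by
      rw [← pow_add, Nat.sub_add_cancel htn]
    rw [inv_pow, ← h1]
    field_simp
  have hp4 : (((2 : ℝ)⁻¹) ^ t) ^ 2 = ((4 : ℝ)⁻¹) ^ t := by
    rw [← pow_mul, mul_comm, pow_mul]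
    norm_num
  have hm1 : (1 : ℝ) ≤ (m : ℝ) := by exact_mod_cast hm
  have hcoef : ((m : ℝ) - 1) * (N : ℝ) ^ (m - 2) * (N : ℝ) ^ 2 ≤ (m : ℝ) * (N : ℝ) ^ m := by
    rcases Nat.lt_or_ge m 2 with h2 | h2
    · have hm1' : m = 1 := by omega
      subst hm1'
      norm_num
    · have hNe : (N : ℝ) ^ (m - 2) * (N : ℝ) ^ 2 = (N : ℝ) ^ m := by
        rw [← pow_add]
        congr 1
        omega
      rw [mul_assoc, hNe]
      exact mul_le_mul_of_nonneg_right (by linarith) (by positivity)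
  have hWb : (m : ℝ) * ((m : ℝ) - 1) * (N : ℝ) ^ (m - 2)
        * (∑ S ∈ 𝒮, ∑ S' ∈ 𝒮, (2 : ℝ) ^ (n - (S ∪ S').card))
      ≤ (m : ℝ) ^ 2 * (N : ℝ) ^ m * (2 ^ n * ((4 : ℝ)⁻¹) ^ t * Real.exp r) := by
    calc (m : ℝ) * ((m : ℝ) - 1) * (N : ℝ) ^ (m - 2)
          * (∑ S ∈ 𝒮, ∑ S' ∈ 𝒮, (2 : ℝ) ^ (n - (S ∪ S').card))
        ≤ (m : ℝ) * ((m : ℝ) - 1) * (N : ℝ) ^ (m - 2)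
            * ((N : ℝ) ^ 2 * 2 ^ n * ((4 : ℝ)⁻¹) ^ t * Real.exp r) := by
          refine mul_le_mul_of_nonneg_left hQ ?_
          exact mul_nonneg (mul_nonneg (by positivity) (by linarith)) (by positivity)
      _ = (m : ℝ) * (((m : ℝ) - 1) * (N : ℝ) ^ (m - 2) * (N : ℝ) ^ 2)
            * (2 ^ n * ((4 : ℝ)⁻¹) ^ t * Real.exp r) := by ring
      _ ≤ (m : ℝ) * ((m : ℝ) * (N : ℝ) ^ m) * (2 ^ n * ((4 : ℝ)⁻¹) ^ t * Real.exp r) := by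
          exact mul_le_mul_of_nonneg_right
            (mul_le_mul_of_nonneg_left hcoef (by positivity)) (by positivity)
      _ = (m : ℝ) ^ 2 * (N : ℝ) ^ m * (2 ^ n * ((4 : ℝ)⁻¹) ^ t * Real.exp r) := by ring
  have hLHS : (m : ℝ) * (2 : ℝ)⁻¹ ^ t * (1 - (m : ℝ) * (2 : ℝ)⁻¹ ^ t * Real.exp r)
        * ((N : ℝ) ^ m * 2 ^ n)
      = (m : ℝ) * (N : ℝ) ^ m * 2 ^ (n - t)
        - (m : ℝ) ^ 2 * (N : ℝ) ^ m * (2 ^ n * ((4 : ℝ)⁻¹) ^ t * Real.exp r) := by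
    rw [← hp2n, ← hp4]
    ring
  rw [hLHS]
  linarith [hWb]


/-- There is an absolute constant `C > 0` such that for all `d, t, m` with `t ≤ (d−1)/2`,
for `𝔰 = (S_1,…,S_m)` independent uniform `t`-element subsets of `{1,…,d−1}` and `x`
uniform on `{0,1}^{d−1}` independent of `𝔰`,
`E[|T_𝔰(x)|·(2 − |T_𝔰(x)|)] ≥ m·2^{−t}·(1 − m·2^{−t}·exp(C·t²/d))`. -/
theorem expectation_Tset_lower :
    ∃ C : ℝ, 0 < C ∧ ∀ d t m : ℕ, 0 < d → 0 < t → 0 < m → 2 * t ≤ d - 1 →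
      let Ω : Finset (Fin m → Finset (Fin (d - 1))) :=
        Finset.univ.filter (fun 𝔰 => ∀ i, (𝔰 i).card = t)
      (m : ℝ) * (2 : ℝ)⁻¹ ^ t
          * (1 - (m : ℝ) * (2 : ℝ)⁻¹ ^ t * Real.exp (C * t ^ 2 / d))
        ≤ (∑ p ∈ Ω ×ˢ (Finset.univ : Finset (Fin (d - 1) → Bool)),
              ((Tset p.1 p.2).card : ℝ) * (2 - ((Tset p.1 p.2).card : ℝ)))
            / ((Ω.card : ℝ) * 2 ^ (d - 1)) := by
  refine ⟨3, by norm_num, ?_⟩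
  intro d t m hd ht hm htd
  intro Ω
  have hd3 : 3 ≤ d := by omega
  have hr : 2 * (t : ℝ) ^ 2 / ((d - 1 : ℕ) : ℝ) ≤ 3 * (t : ℝ) ^ 2 / (d : ℝ) := by
    have h1 : ((d - 1 : ℕ) : ℝ) = (d : ℝ) - 1 := by
      push_cast [Nat.cast_sub (by omega : 1 ≤ d)]
      ring
    have hd3' : (3 : ℝ) ≤ (d : ℝ) := by exact_mod_cast hd3
    rw [h1, div_le_div_iff₀ (by linarith) (by linarith)]
    nlinarith [sq_nonneg (t : ℝ)]
  have key := main_bound (d - 1) t m ht hm htd (3 * (t : ℝ) ^ 2 / d) hr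
  convert key using 2 <;> norm_num
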